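/- With V = Q ⊕ U ⊕ U* graded as V_{−1}=U, V₀=Q, V₁=U* and ω̃ as above with ω ≠ 0, if an element α ∈ 𝔰𝔭_{ω̃}(V)₂ satisfies [α, 𝔰𝔭_{ω̃}(V)_{−1}] = 0, then α = 0; similarly if β ∈ 𝔰𝔭_{ω̃}(V)₁ satisfies [β, 𝔰𝔭_{ω̃}(V)_{−2}] = 0, then β = 0. -/

import Mathlib

noncomputable section

variable (U : Type*) [AddCommGroup U] [Module ℂ U]
variable (Q : Type*) [AddCommGroup Q] [Module ℂ Q]

/-- `V = Q ⊕ U ⊕ U*`, graded by `V₋₁ = U`, `V₀ = Q`, `V₁ = U*`. -/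
abbrev Vtot := Q × U × Module.Dual ℂ U

/-- The extension `ω̃` of `ω ∈ Λ²Q*` to `V = Q ⊕ U ⊕ U*`. -/
def omegaT (ω : Q →ₗ[ℂ] Q →ₗ[ℂ] ℂ) (x y : Vtot U Q) : ℂ :=
  ω x.1 y.1 + x.2.2 y.2.1 - y.2.2 x.2.1

/-- Membership in `𝔰𝔭_{ω̃}(V)`. -/
def InSp (ω : Q →ₗ[ℂ] Q →ₗ[ℂ] ℂ) (φ : Vtot U Q →ₗ[ℂ] Vtot U Q) : Prop :=
  ∀ x y : Vtot U Q, omegaT U Q ω (φ x) y + omegaT U Q ω x (φ y) = 0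

/-- Degree `2` piece: `U → U*`, all else killed. -/
def IsDeg₂ (φ : Vtot U Q →ₗ[ℂ] Vtot U Q) : Prop :=
  ∃ α : U →ₗ[ℂ] Module.Dual ℂ U, ∀ x : Vtot U Q, φ x = (0, 0, α x.2.1)

/-- Degree `1` piece: `U → Q` and `Q → U*`. -/
def IsDeg₁ (φ : Vtot U Q →ₗ[ℂ] Vtot U Q) : Prop :=
  ∃ (β : U →ₗ[ℂ] Q) (β' : Q →ₗ[ℂ] Module.Dual ℂ U),
    ∀ x : Vtot U Q, φ x = (β x.2.1, 0, β' x.1)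

/-- Degree `-1` piece: `U* → Q` and `Q → U`. -/
def IsDegNeg₁ (φ : Vtot U Q →ₗ[ℂ] Vtot U Q) : Prop :=
  ∃ (γ : Module.Dual ℂ U →ₗ[ℂ] Q) (γ' : Q →ₗ[ℂ] U),
    ∀ x : Vtot U Q, φ x = (γ x.2.2, γ' x.1, 0)

/-- Degree `-2` piece: `U* → U`, all else killed. -/
def IsDegNeg₂ (φ : Vtot U Q →ₗ[ℂ] Vtot U Q) : Prop :=
  ∃ η : Module.Dual ℂ U →ₗ[ℂ] U, ∀ x : Vtot U Q, φ x = (0, η x.2.2, 0)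

/-!
Bracketing `α ∈ 𝔰𝔭₂` with the degree `-1` element `ψ_{a,u₀}` (`f ↦ -f(u₀) a` on `U*`,
`q ↦ ω(a, q) u₀` on `Q`) and evaluating on `u ∈ U` gives `α(u)(u₀) • a = 0`; any `a ≠ 0`
works, and one exists since `ω ≠ 0`. For `β ∈ 𝔰𝔭₁` with parts `β : U → Q`, `β' : Q → U*`,
bracketing with the degree `-2` element `f ↦ f(u₀) u₀` and evaluating on `f ∈ U*` gives
`f(u₀) • β(u₀) = 0`, so `β = 0`; the symplectic condition `β'(q)(u) = ω(β u, q)` then gives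
`β' = 0`.
-/

variable {U Q}

section DegreeNegative

variable (ω : Q →ₗ[ℂ] Q →ₗ[ℂ] ℂ)

def spNegOne (a : Q) (u₀ : U) : Vtot U Q →ₗ[ℂ] Vtot U Q where
  toFun x := (-x.2.2 u₀ • a, ω a x.1 • u₀, 0)
  map_add' x y := by simp [add_smul, add_comm]
  map_smul' c x := by simp [smul_smul]

@[simp]
theorem spNegOne_apply (a : Q) (u₀ : U) (x : Vtot U Q) :
    spNegOne ω a u₀ x = (-x.2.2 u₀ • a, ω a x.1 • u₀, 0) :=
  rfl

theorem isDegNeg₁_spNegOne (a : Q) (u₀ : U) : IsDegNeg₁ U Q (spNegOne ω a u₀) :=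
  ⟨-(Module.Dual.eval ℂ U u₀).smulRight a, (ω a).smulRight u₀, fun x => by simp⟩

theorem inSp_spNegOne {ω : Q →ₗ[ℂ] Q →ₗ[ℂ] ℂ} (hω : ω.IsAlt) (a : Q) (u₀ : U) :
    InSp U Q ω (spNegOne ω a u₀) := by
  intro x y
  simp only [omegaT, spNegOne_apply, map_smul, LinearMap.smul_apply, smul_eq_mul,
    LinearMap.zero_apply, ← hω.neg x.1 a]
  ring

def spNegTwo (u₀ : U) : Vtot U Q →ₗ[ℂ] Vtot U Q where
  toFun x := (0, x.2.2 u₀ • u₀, 0)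
  map_add' x y := by simp [add_smul]
  map_smul' c x := by simp [smul_smul]

@[simp]
theorem spNegTwo_apply (u₀ : U) (x : Vtot U Q) : spNegTwo u₀ x = (0, x.2.2 u₀ • u₀, 0) :=
  rfl

theorem isDegNeg₂_spNegTwo (u₀ : U) : IsDegNeg₂ U Q (spNegTwo u₀) :=
  ⟨(Module.Dual.eval ℂ U u₀).smulRight u₀, fun x => by simp⟩

theorem inSp_spNegTwo (u₀ : U) : InSp U Q ω (spNegTwo u₀) := by
  intro x y
  simp only [omegaT, spNegTwo_apply, map_zero, map_smul, smul_eq_mul, LinearMap.zero_apply]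
  ring

end DegreeNegative

theorem IsDeg₂.eq_zero_of_comp_spNegOne_eq {ω : Q →ₗ[ℂ] Q →ₗ[ℂ] ℂ}
    {φ : Vtot U Q →ₗ[ℂ] Vtot U Q} (hφ : IsDeg₂ U Q φ) {a : Q} (ha : a ≠ 0)
    (hcomm : ∀ u₀ : U, φ ∘ₗ spNegOne ω a u₀ = spNegOne ω a u₀ ∘ₗ φ) : φ = 0 := by
  obtain ⟨α, hα⟩ := hφ
  have hα0 : α = 0 := by
    ext u u₀
    simpa [hα, ha] using congr_arg Prod.fst (LinearMap.congr_fun (hcomm u₀) (0, u, 0)).symm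
  ext x <;> simp [hα, hα0]

theorem IsDeg₁.eq_zero_of_comp_spNegTwo_eq {ω : Q →ₗ[ℂ] Q →ₗ[ℂ] ℂ}
    {φ : Vtot U Q →ₗ[ℂ] Vtot U Q} (hsp : InSp U Q ω φ) (hφ : IsDeg₁ U Q φ)
    (hcomm : ∀ u₀ : U, φ ∘ₗ spNegTwo u₀ = spNegTwo u₀ ∘ₗ φ) : φ = 0 := by
  obtain ⟨β, β', hβ⟩ := hφ
  have hβ'_eq (q : Q) (u : U) : β' q u = ω (β u) q := by
    have h := hsp (0, u, 0) (q, 0, 0)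
    simp only [omegaT, hβ, map_zero] at h
    linear_combination -h
  have hβ0 : β = 0 := by
    ext u₀
    rcases eq_or_ne u₀ 0 with rfl | hu₀
    · simp
    obtain ⟨f, hf⟩ := Module.Projective.exists_dual_eq_one ℂ hu₀
    simpa [hβ, hf] using congr_arg Prod.fst (LinearMap.congr_fun (hcomm u₀) (0, 0, f))
  have hβ'0 : β' = 0 := by
    ext q u
    simp [hβ'_eq, hβ0]
  ext x <;> simp [hβ, hβ0, hβ'0]

theorem sp_bracket_injectivity_general
    (ω : Q →ₗ[ℂ] Q →ₗ[ℂ] ℂ) (halt : ∀ q : Q, ω q q = 0) (hne : ω ≠ 0) :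
    (∀ φ : Vtot U Q →ₗ[ℂ] Vtot U Q, InSp U Q ω φ → IsDeg₂ U Q φ →
      (∀ ψ : Vtot U Q →ₗ[ℂ] Vtot U Q, InSp U Q ω ψ → IsDegNeg₁ U Q ψ →
        φ.comp ψ = ψ.comp φ) →
      φ = 0) ∧
    (∀ φ : Vtot U Q →ₗ[ℂ] Vtot U Q, InSp U Q ω φ → IsDeg₁ U Q φ →
      (∀ ψ : Vtot U Q →ₗ[ℂ] Vtot U Q, InSp U Q ω ψ → IsDegNeg₂ U Q ψ →
        φ.comp ψ = ψ.comp φ) →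
      φ = 0) := by
  obtain ⟨a, ha⟩ : ∃ a, ω a ≠ 0 := DFunLike.ne_iff.mp hne
  have ha0 : a ≠ 0 := by
    rintro rfl
    simp at ha
  refine ⟨fun φ _ hφ hcomm => ?_, fun φ hsp hφ hcomm => ?_⟩
  · exact hφ.eq_zero_of_comp_spNegOne_eq ha0 fun u₀ =>
      hcomm _ (inSp_spNegOne halt a u₀) (isDegNeg₁_spNegOne ω a u₀)
  · exact hφ.eq_zero_of_comp_spNegTwo_eq hsp fun u₀ =>
      hcomm _ (inSp_spNegTwo ω u₀) (isDegNeg₂_spNegTwo u₀)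

theorem sp_bracket_injectivity
    (hU : 2 ≤ Module.finrank ℂ U)
    (ω : Q →ₗ[ℂ] Q →ₗ[ℂ] ℂ) (halt : ∀ q : Q, ω q q = 0) (hne : ω ≠ 0) :
    (∀ φ : Vtot U Q →ₗ[ℂ] Vtot U Q, InSp U Q ω φ → IsDeg₂ U Q φ →
      (∀ ψ : Vtot U Q →ₗ[ℂ] Vtot U Q, InSp U Q ω ψ → IsDegNeg₁ U Q ψ →
        φ.comp ψ = ψ.comp φ) →
      φ = 0) ∧
    (∀ φ : Vtot U Q →ₗ[ℂ] Vtot U Q, InSp U Q ω φ → IsDeg₁ U Q φ →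
      (∀ ψ : Vtot U Q →ₗ[ℂ] Vtot U Q, InSp U Q ω ψ → IsDegNeg₂ U Q ψ →
        φ.comp ψ = ψ.comp φ) →
      φ = 0) :=
  sp_bracket_injectivity_general ω halt hne
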